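/- arXiv:2512.20542 — 2 statements merged into one kernel-verified Lean document; each statement's English description precedes it below -/
import Mathlib

section
/- For coprime positive integers m, n and a real parameter a, ∫₀¹ ({m x} − a)({n x} − a) dx = 1/(12 m n) + (1/2 − a)². -/
/-!
Write `b₁(x) = {x} - 1/2` (`sawtooth`). The integrand is `(b₁(mx) + c)(b₁(nx) + c)` with
`c = 1/2 - a`, and `b₁(kx)` has mean zero on `[0, 1]`, so everything reduces to Franel's identity
`∫₀¹ b₁(mx) b₁(nx) dx = 1/(12mn)`.

Substituting `y = mx` and cutting `[0, m]` into unit intervals gives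
`(1/m) ∫₀¹ b₁(y) ∑_{j<m} b₁((ny + nj)/m) dy`. Since `n` is invertible modulo `m`, the shifts
`nj` run through all residues mod `m`, and the distribution relation
`∑_{j<m} b₁((t + j)/m) = b₁(t)` collapses the inner sum to `b₁(ny)`. Hence
`∫₀¹ b₁(mx) b₁(nx) dx = (1/m) ∫₀¹ b₁(y) b₁(ny) dy`; applying this once more to the coprime
pair `(n, 1)` leaves `(1/mn) ∫₀¹ b₁² = 1/(12mn)`.
-/

open Finset Function MeasureTheory intervalIntegral

lemma sum_range_comp_mul_of_coprime {M : Type*} [AddCommMonoid M] {G : ℕ → M} {m n : ℕ}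
    (hG : Periodic G m) (h : n.Coprime m) :
    ∑ j ∈ range m, G (n * j) = ∑ j ∈ range m, G j := by
  have hmaps : Set.MapsTo (fun j => n * j % m) (range m) (range m) := fun j hj =>
    mem_range.2 (Nat.mod_lt _ (pos_of_ne_zero (by simpa using ne_empty_of_mem hj)))
  have hinj : Set.InjOn (fun j => n * j % m) (range m) := fun i hi j hj hij =>
    (Nat.ModEq.cancel_left_of_coprime h.symm hij).eq_of_lt_of_lt (mem_range.1 hi) (mem_range.1 hj)
  exact sum_nbij (fun j => n * j % m) hmaps hinj
    (surjOn_of_injOn_of_card_le _ hmaps hinj le_rfl) fun j _ => (hG.map_mod_nat _).symm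

lemma integral_comp_natCast_mul {E : Type*} [NormedAddCommGroup E] [NormedSpace ℝ E]
    {H : ℝ → E} (hH : ∀ u v, IntervalIntegrable H volume u v) {m : ℕ} (hm : 0 < m) :
    ∫ x in (0 : ℝ)..1, H (m * x) =
      (m : ℝ)⁻¹ • ∫ y in (0 : ℝ)..1, ∑ j ∈ range m, H (y + j) := by
  have hm' : (m : ℝ) ≠ 0 := by positivity
  have hshift : ∀ j ∈ range m, IntervalIntegrable (fun y => H (y + j)) volume 0 1 :=
    fun j _ => (IntervalIntegrable.comp_add_right_iff (by finiteness)).2 (hH _ _)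
  rw [integral_comp_mul_left H hm', mul_zero, mul_one, integral_finsetSum hshift]
  congr 1
  have hsplit := sum_integral_adjacent_intervals (a := fun k : ℕ => (k : ℝ)) (f := H)
    (μ := volume) (n := m) fun k _ => hH _ _
  simp only [Nat.cast_zero, Nat.cast_add_one] at hsplit
  rw [← hsplit]
  refine sum_congr rfl fun j _ => ?_
  rw [integral_comp_add_right, zero_add, add_comm]

lemma integral_comp_fract {E : Type*} [NormedAddCommGroup E] [NormedSpace ℝ E] (φ : ℝ → E) :
    ∫ x in (0 : ℝ)..1, φ (Int.fract x) = ∫ x in (0 : ℝ)..1, φ x := by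
  refine integral_congr_ae ?_
  filter_upwards [Measure.ae_ne volume (1 : ℝ)] with x hx1 hx
  rw [Set.uIoc_of_le zero_le_one] at hx
  rw [Int.fract_eq_self.2 ⟨hx.1.le, lt_of_le_of_ne hx.2 hx1⟩]

lemma Measurable.intervalIntegrable_of_abs_le {f : ℝ → ℝ} (hf : Measurable f) {C : ℝ}
    (hC : ∀ x, |f x| ≤ C) (u v : ℝ) : IntervalIntegrable f volume u v :=
  (intervalIntegrable_const (c := C)).mono_fun' hf.aestronglyMeasurable
    (Filter.Eventually.of_forall hC)

noncomputable def sawtooth (x : ℝ) : ℝ := Int.fract x - 1 / 2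

namespace sawtooth

@[simp]
lemma add_natCast (x : ℝ) (k : ℕ) : sawtooth (x + k) = sawtooth x := by
  simp [sawtooth]

lemma periodic : Periodic sawtooth 1 := by
  simpa using add_natCast (k := 1)

lemma abs_le (x : ℝ) : |sawtooth x| ≤ 1 / 2 := by
  rw [_root_.abs_le, sawtooth]
  constructor <;> linarith [Int.fract_nonneg x, Int.fract_lt_one x]

lemma measurable : Measurable sawtooth :=
  measurable_fract.sub_const _

end sawtooth

lemma intervalIntegrable_sawtooth_comp {f : ℝ → ℝ} (hf : Measurable f) (u v : ℝ) :
    IntervalIntegrable (fun x => sawtooth (f x)) volume u v :=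
  (sawtooth.measurable.comp hf).intervalIntegrable_of_abs_le (fun x => sawtooth.abs_le (f x)) u v

lemma intervalIntegrable_sawtooth_comp_mul_sawtooth_comp {f g : ℝ → ℝ} (hf : Measurable f)
    (hg : Measurable g) (u v : ℝ) :
    IntervalIntegrable (fun x => sawtooth (f x) * sawtooth (g x)) volume u v :=
  ((sawtooth.measurable.comp hf).mul (sawtooth.measurable.comp hg)).intervalIntegrable_of_abs_le
    (C := 1 / 2 * (1 / 2))
    (fun x => by
      simp only [Pi.mul_apply, comp_apply, abs_mul]
      exact mul_le_mul (sawtooth.abs_le _) (sawtooth.abs_le _) (abs_nonneg _) (by norm_num)) u v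

lemma integral_sawtooth : ∫ x in (0 : ℝ)..1, sawtooth x = 0 :=
  (integral_comp_fract (· - 1 / 2)).trans (by norm_num)

lemma integral_sawtooth_mul_self : ∫ x in (0 : ℝ)..1, sawtooth x * sawtooth x = 1 / 12 :=
  (integral_comp_fract fun y => (y - 1 / 2) * (y - 1 / 2)).trans <| by
    rw [integral_comp_sub_right (fun y => y * y)]
    norm_num [← sq]

lemma integral_sawtooth_comp_natCast_mul {m : ℕ} (hm : 0 < m) :
    ∫ x in (0 : ℝ)..1, sawtooth (m * x) = 0 := by
  rw [integral_comp_natCast_mul (H := sawtooth) (intervalIntegrable_sawtooth_comp measurable_id) hm]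
  simp [integral_sawtooth]

lemma periodic_sum_sawtooth_add_div (m : ℕ) :
    Periodic (fun t => ∑ j ∈ range m, sawtooth ((t + j) / m)) 1 := by
  intro t
  cases m with
  | zero => simp
  | succ k =>
    dsimp only
    rw [sum_range_succ, sum_range_succ']
    congr 1
    · refine sum_congr rfl fun j _ => ?_
      push_cast
      ring_nf
    · rw [Nat.cast_zero, show (t + 1 + k) / (k + 1 : ℕ) = (t + 0) / (k + 1 : ℕ) + 1 by
        push_cast; field_simp; ring]
      exact sawtooth.periodic _

lemma sum_sawtooth_add_div_of_mem_Ico {m : ℕ} (hm : 0 < m) {t : ℝ} (ht : t ∈ Set.Ico 0 1) :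
    ∑ j ∈ range m, sawtooth ((t + j) / m) = sawtooth t := by
  have hsum : ∑ j ∈ range m, (j : ℝ) = m * (m - 1) / 2 := by
    have := congrArg (Nat.cast (R := ℝ)) (sum_range_id_mul_two m)
    push_cast [Nat.cast_sub hm] at this
    linarith
  have hfract : ∀ j ∈ range m, Int.fract ((t + j) / m) = (t + j) / m := by
    intro j hj
    have hj' : (j : ℝ) + 1 ≤ m := by exact_mod_cast mem_range.1 hj
    rw [Int.fract_eq_self, div_lt_one (by positivity)]
    exact ⟨div_nonneg (by linarith [ht.1]) m.cast_nonneg, by linarith [ht.2]⟩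
  simp only [sawtooth, sum_sub_distrib, sum_congr rfl hfract, ← sum_div, sum_add_distrib,
    sum_const, card_range, hsum, Int.fract_eq_self.2 ht]
  field_simp
  ring

lemma sum_sawtooth_add_div {m : ℕ} (hm : 0 < m) (t : ℝ) :
    ∑ j ∈ range m, sawtooth ((t + j) / m) = sawtooth t := by
  have h := sum_sawtooth_add_div_of_mem_Ico hm ⟨Int.fract_nonneg t, Int.fract_lt_one t⟩
  rwa [Int.fract, ← mul_one (⌊t⌋ : ℝ), (periodic_sum_sawtooth_add_div m).sub_int_mul_eq,
    sawtooth.periodic.sub_int_mul_eq] at h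

lemma integral_sawtooth_mul_sawtooth_of_coprime {m n : ℕ} (hm : 0 < m) (h : n.Coprime m) :
    ∫ x in (0 : ℝ)..1, sawtooth (m * x) * sawtooth (n * x)
      = (m : ℝ)⁻¹ * ∫ y in (0 : ℝ)..1, sawtooth y * sawtooth (n * y) := by
  have hm' : (m : ℝ) ≠ 0 := by positivity
  have hreindex (t : ℝ) :
      ∑ j ∈ range m, sawtooth ((t + (n * j : ℕ)) / m) =
        ∑ j ∈ range m, sawtooth ((t + j) / m) :=
    sum_range_comp_mul_of_coprime (G := fun j => sawtooth ((t + j) / m)) (fun j => by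
      dsimp only
      rw [Nat.cast_add, ← add_assoc, add_div _ (m : ℝ), div_self hm']
      exact sawtooth.periodic _) h
  calc ∫ x in (0 : ℝ)..1, sawtooth (m * x) * sawtooth (n * x)
      = ∫ x in (0 : ℝ)..1, sawtooth (m * x) * sawtooth (n * (m * x) / m) := by
        congr with x; field_simp
    _ = (m : ℝ)⁻¹ *
          ∫ y in (0 : ℝ)..1, ∑ j ∈ range m, sawtooth (y + j) * sawtooth (n * (y + j) / m) :=
        integral_comp_natCast_mul (H := fun y => sawtooth y * sawtooth (n * y / m))
          (intervalIntegrable_sawtooth_comp_mul_sawtooth_comp measurable_id (by fun_prop)) hm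
    _ = (m : ℝ)⁻¹ * ∫ y in (0 : ℝ)..1, sawtooth y * sawtooth (n * y) := by
        congr with y
        have := hreindex (n * y)
        push_cast at this
        rw [← sum_sawtooth_add_div hm (n * y), ← this, mul_sum]
        simp_rw [sawtooth.add_natCast, mul_add]

theorem integral_sawtooth_mul_sawtooth {m n : ℕ} (hm : 0 < m) (hn : 0 < n) (h : m.Coprime n) :
    ∫ x in (0 : ℝ)..1, sawtooth (m * x) * sawtooth (n * x) = 1 / (12 * m * n) := by
  calc ∫ x in (0 : ℝ)..1, sawtooth (m * x) * sawtooth (n * x)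
      = (m : ℝ)⁻¹ * ∫ y in (0 : ℝ)..1, sawtooth (n * y) * sawtooth ((1 : ℕ) * y) := by
        rw [integral_sawtooth_mul_sawtooth_of_coprime hm h.symm]
        congr with y
        rw [Nat.cast_one, one_mul, mul_comm]
    _ = (m : ℝ)⁻¹ * ((n : ℝ)⁻¹ * ∫ z in (0 : ℝ)..1, sawtooth z * sawtooth z) := by
        rw [integral_sawtooth_mul_sawtooth_of_coprime hn (Nat.coprime_one_left n), Nat.cast_one]
        simp_rw [one_mul]
    _ = 1 / (12 * m * n) := by
        rw [integral_sawtooth_mul_self]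
        field_simp

theorem franel_shifted (m n : ℕ) (hm : 0 < m) (hn : 0 < n) (hmn : Nat.Coprime m n) (a : ℝ) :
    ∫ x in (0:ℝ)..1, (Int.fract (m * x) - a) * (Int.fract (n * x) - a)
      = 1 / (12 * m * n) + (1/2 - a)^2 := by
  have hexpand (x : ℝ) : (Int.fract (m * x) - a) * (Int.fract (n * x) - a)
      = sawtooth (m * x) * sawtooth (n * x) + (1 / 2 - a) * sawtooth (m * x)
        + (1 / 2 - a) * sawtooth (n * x) + (1 / 2 - a) ^ 2 := by
    simp only [sawtooth]; ring
  have hb (k : ℕ) :=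
    (intervalIntegrable_sawtooth_comp (measurable_const_mul (k : ℝ)) 0 1).const_mul (1 / 2 - a)
  have hbb := intervalIntegrable_sawtooth_comp_mul_sawtooth_comp
    (measurable_const_mul (m : ℝ)) (measurable_const_mul (n : ℝ)) 0 1
  simp_rw [hexpand]
  rw [intervalIntegral.integral_add ((hbb.add (hb m)).add (hb n)) intervalIntegrable_const,
    intervalIntegral.integral_add (hbb.add (hb m)) (hb n),
    intervalIntegral.integral_add hbb (hb m),
    intervalIntegral.integral_const_mul, intervalIntegral.integral_const_mul,
    integral_sawtooth_mul_sawtooth hm hn hmn, integral_sawtooth_comp_natCast_mul hm,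
    integral_sawtooth_comp_natCast_mul hn, intervalIntegral.integral_const]
  simp
end

section
/- (Parametric Dedekind–Rademacher reciprocity) Let ν₀, ν₁, ν₂ be pairwise coprime positive integers and fix a ∈ (0,1). Define f(x) = {x} − a and S_f(ν|ν_k) = Σ_{i=1}^{ν_k−1} f(iν_j/ν_k)·f(iν_l/ν_k) where {j,l} = {0,1,2}∖{k}. Then Σ_{k=0}^{2} S_f(ν|ν_k) = (ν₀²+ν₁²+ν₂²)/(12 ν₀ν₁ν₂) + (1/2 − a)²(ν₀+ν₁+ν₂) − (1 − 3a + 3a²). -/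
/-!
Write `{ib/a} = ib/a - ⌊ib/a⌋`. Each of the three sums becomes a combination of `∑ i²`, the
moments `∑ i ⌊ib/a⌋` and the products `∑ ⌊ib/a⌋ ⌊ic/a⌋`; the parameter only enters through
`∑ {ib/a} = (a - 1)/2`, as `i ↦ ib mod a` permutes `[1, a)`.

The three product sums add up to `(a-1)(b-1)(c-1)`: a lattice point `(i, j, k)` of the box
`[1,a) × [1,b) × [1,c)` is counted in exactly one of them, according to which of `i/a, j/b, k/c`
is largest (coprimality rules out ties). The moments combine in pairs through the reciprocity
`b ∑ i ⌊ib/a⌋ + a ∑ j ⌊ja/b⌋ = (a-1)(b-1)(8ab-a-b-1)/12`, which comes from weighting the lattice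
points of `[1,a) × [1,b)` by `2i` and splitting them along the diagonal `j/b = i/a`.
-/

open Finset

theorem sum_Ico_one_eq_sum_range {M : Type*} [AddCommMonoid M] {f : ℕ → M} (hf : f 0 = 0)
    (n : ℕ) : ∑ i ∈ Ico 1 n, f i = ∑ i ∈ range n, f i := by
  rcases n.eq_zero_or_pos with rfl | hn
  · simp
  · rw [sum_range_eq_add_Ico f hn, hf, zero_add]

theorem sum_Ico_one_two_mul (n : ℕ) : ∑ i ∈ Ico 1 n, 2 * i = n * (n - 1) := by
  rw [sum_Ico_one_eq_sum_range (mul_zero 2), ← mul_sum, mul_comm, sum_range_id_mul_two]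

theorem sum_Ico_one_natCast {K : Type*} [Field K] [CharZero K] (n : ℕ) :
    ∑ i ∈ Ico 1 n, (i : K) = n * (n - 1) / 2 := by
  rw [sum_Ico_one_eq_sum_range Nat.cast_zero]
  induction n with
  | zero => simp
  | succ n ih => rw [sum_range_succ, ih]; push_cast; ring

theorem sum_Ico_one_natCast_sq {K : Type*} [Field K] [CharZero K] (n : ℕ) :
    ∑ i ∈ Ico 1 n, (i : K) ^ 2 = n * (n - 1) * (2 * n - 1) / 6 := by
  rw [sum_Ico_one_eq_sum_range (by simp)]
  induction n with
  | zero => simp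
  | succ n ih => rw [sum_range_succ, ih]; push_cast; ring

theorem ite_mul_ite_add_cyclic {α : Type*} [LinearOrder α] {x y z : α}
    (hxy : x ≠ y) (hyz : y ≠ z) (hxz : x ≠ z) :
    (if y < x then 1 else 0) * (if z < x then 1 else 0)
      + (if x < y then 1 else 0) * (if z < y then 1 else 0)
      + (if x < z then 1 else 0) * (if y < z then 1 else 0) = 1 := by
  split_ifs <;> first | rfl | order

variable {a b c i : ℕ}

theorem mul_ne_mul_of_coprime (hab : a.Coprime b) (hi : 0 < i) (hia : i < a) (j : ℕ) :
    j * a ≠ i * b := by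
  intro h
  have : a ∣ i := hab.dvd_of_dvd_mul_right ⟨j, by rw [← h, mul_comm]⟩
  exact absurd (Nat.le_of_dvd hi this) (by omega)

theorem filter_mul_lt_mul_eq_Ico (hab : a.Coprime b) (hi : 0 < i) (hia : i < a) :
    {j ∈ Ico 1 b | j * a < i * b} = Ico 1 (i * b / a + 1) := by
  have hb : 0 < b := Nat.pos_of_ne_zero (by rintro rfl; simp_all)
  have hdiv : i * b / a < b := Nat.div_lt_of_lt_mul (Nat.mul_lt_mul_of_pos_right hia hb)
  ext j
  have hle : j ≤ i * b / a ↔ j * a ≤ i * b := Nat.le_div_iff_mul_le (by omega)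
  have := mul_ne_mul_of_coprime hab hi hia j
  simp only [mem_filter, mem_Ico]
  omega

theorem card_filter_mul_lt_mul (hab : a.Coprime b) (hi : 0 < i) (hia : i < a) :
    #{j ∈ Ico 1 b | j * a < i * b} = i * b / a := by
  rw [filter_mul_lt_mul_eq_Ico hab hi hia, Nat.card_Ico, Nat.add_sub_cancel]

theorem div_mul_div_eq_sum_sum (hab : a.Coprime b) (hac : a.Coprime c) (hi : 0 < i)
    (hia : i < a) :
    (i * b / a) * (i * c / a) = ∑ j ∈ Ico 1 b, ∑ k ∈ Ico 1 c,
      (if j * a < i * b then 1 else 0) * (if k * a < i * c then 1 else 0) := by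
  rw [← card_filter_mul_lt_mul hab hi hia, ← card_filter_mul_lt_mul hac hi hia,
    card_filter, card_filter, sum_mul_sum]

theorem ite_mul_ite_add_cyclic_of_coprime {j k : ℕ} (hab : a.Coprime b) (hac : a.Coprime c)
    (hbc : b.Coprime c) (hi : i ∈ Ico 1 a) (hj : j ∈ Ico 1 b) (hk : k ∈ Ico 1 c) :
    (if j * a < i * b then 1 else 0) * (if k * a < i * c then 1 else 0)
      + (if i * b < j * a then 1 else 0) * (if k * b < j * c then 1 else 0)
      + (if i * c < k * a then 1 else 0) * (if j * c < k * b then 1 else 0) = 1 := by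
  rw [mem_Ico] at hi hj hk
  have ha : (0 : ℚ) < a := Nat.cast_pos.2 (by omega)
  have hb : (0 : ℚ) < b := Nat.cast_pos.2 (by omega)
  have hc : (0 : ℚ) < c := Nat.cast_pos.2 (by omega)
  have div_ne_div {m n p q : ℕ} (hn : (0 : ℚ) < n) (hq : (0 : ℚ) < q) (h : m * q ≠ p * n) :
      (p : ℚ) / q ≠ m / n := by
    rw [Ne, div_eq_div_iff hq.ne' hn.ne']
    exact_mod_cast h.symm
  have := ite_mul_ite_add_cyclic (x := (i : ℚ) / a) (y := (j : ℚ) / b) (z := (k : ℚ) / c)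
    (div_ne_div hb ha (mul_ne_mul_of_coprime hab hi.1 hi.2 j))
    (div_ne_div hc hb (mul_ne_mul_of_coprime hbc hj.1 hj.2 k))
    (div_ne_div hc ha (mul_ne_mul_of_coprime hac hi.1 hi.2 k))
  simpa only [div_lt_div_iff₀, ha, hb, hc, ← Nat.cast_mul, Nat.cast_lt] using this

theorem sum_div_mul_div_cyclic (hab : a.Coprime b) (hac : a.Coprime c) (hbc : b.Coprime c) :
    ∑ i ∈ Ico 1 a, (i * b / a) * (i * c / a) + ∑ j ∈ Ico 1 b, (j * a / b) * (j * c / b)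
      + ∑ k ∈ Ico 1 c, (k * a / c) * (k * b / c) = (a - 1) * (b - 1) * (c - 1) := by
  have h₁ : ∑ i ∈ Ico 1 a, (i * b / a) * (i * c / a) = ∑ i ∈ Ico 1 a, ∑ j ∈ Ico 1 b,
      ∑ k ∈ Ico 1 c, (if j * a < i * b then 1 else 0) * (if k * a < i * c then 1 else 0) :=
    sum_congr rfl fun i hi => div_mul_div_eq_sum_sum hab hac (mem_Ico.1 hi).1 (mem_Ico.1 hi).2
  have h₂ : ∑ j ∈ Ico 1 b, (j * a / b) * (j * c / b) = ∑ i ∈ Ico 1 a, ∑ j ∈ Ico 1 b,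
      ∑ k ∈ Ico 1 c, (if i * b < j * a then 1 else 0) * (if k * b < j * c then 1 else 0) := by
    rw [sum_comm]
    exact sum_congr rfl fun j hj =>
      div_mul_div_eq_sum_sum hab.symm hbc (mem_Ico.1 hj).1 (mem_Ico.1 hj).2
  have h₃ : ∑ k ∈ Ico 1 c, (k * a / c) * (k * b / c) = ∑ i ∈ Ico 1 a, ∑ j ∈ Ico 1 b,
      ∑ k ∈ Ico 1 c, (if i * c < k * a then 1 else 0) * (if j * c < k * b then 1 else 0) := by
    conv_rhs => enter [2, i]; rw [sum_comm]
    rw [sum_comm]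
    exact sum_congr rfl fun k hk =>
      div_mul_div_eq_sum_sum hac.symm hbc.symm (mem_Ico.1 hk).1 (mem_Ico.1 hk).2
  rw [h₁, h₂, h₃, ← sum_add_distrib, ← sum_add_distrib]
  simp_rw [← sum_add_distrib]
  rw [sum_congr rfl fun i hi => sum_congr rfl fun j hj => sum_congr rfl fun k hk =>
    ite_mul_ite_add_cyclic_of_coprime hab hac hbc hi hj hk]
  simp [mul_assoc]

theorem sum_two_mul_mul_div_add_sum_div_mul_succ (hab : a.Coprime b) :
    ∑ i ∈ Ico 1 a, 2 * i * (i * b / a) + ∑ j ∈ Ico 1 b, (j * a / b) * (j * a / b + 1)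
      = a * (a - 1) * (b - 1) := by
  have hsplit : ∀ i ∈ Ico 1 a, ∑ j ∈ Ico 1 b, 2 * i
      = ∑ j ∈ Ico 1 b with j * a < i * b, 2 * i
        + ∑ j ∈ Ico 1 b with i * b < j * a, 2 * i := by
    intro i hi
    rw [mem_Ico] at hi
    rw [sum_filter, sum_filter, ← sum_add_distrib]
    refine sum_congr rfl fun j _ => ?_
    have := mul_ne_mul_of_coprime hab hi.1 hi.2 j
    split_ifs <;> omega
  have hbelow : ∀ i ∈ Ico 1 a,
      ∑ j ∈ Ico 1 b with j * a < i * b, 2 * i = 2 * i * (i * b / a) := by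
    intro i hi
    rw [mem_Ico] at hi
    rw [sum_const, card_filter_mul_lt_mul hab hi.1 hi.2, smul_eq_mul, mul_comm]
  have habove : ∀ j ∈ Ico 1 b, ∑ i ∈ Ico 1 a with i * b < j * a, 2 * i
      = (j * a / b) * (j * a / b + 1) := by
    intro j hj
    rw [mem_Ico] at hj
    rw [filter_mul_lt_mul_eq_Ico hab.symm hj.1 hj.2, sum_Ico_one_two_mul, Nat.add_sub_cancel,
      mul_comm]
  calc _ = ∑ i ∈ Ico 1 a, ∑ j ∈ Ico 1 b, 2 * i := by
        rw [sum_congr rfl hsplit, sum_add_distrib, sum_congr rfl hbelow,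
          sum_comm' (t' := Ico 1 b) (s' := fun j => {i ∈ Ico 1 a | i * b < j * a})
            (by simp only [mem_filter]; tauto), sum_congr rfl habove]
    _ = a * (a - 1) * (b - 1) := by
        simp only [sum_const, Nat.card_Ico, smul_eq_mul]
        rw [← mul_sum, sum_Ico_one_two_mul, mul_comm]

theorem sum_Ico_mul_mod {M : Type*} [AddCommMonoid M] (hab : a.Coprime b) (f : ℕ → M) :
    ∑ i ∈ Ico 1 a, f (i * b % a) = ∑ i ∈ Ico 1 a, f i := by
  have hmaps : Set.MapsTo (· * b % a) (Ico 1 a : Set ℕ) (Ico 1 a) := by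
    intro i hi
    simp only [coe_Ico, Set.mem_Ico] at hi ⊢
    refine ⟨Nat.pos_of_ne_zero fun h => ?_, Nat.mod_lt _ (by omega)⟩
    have : a ∣ i := hab.dvd_of_dvd_mul_right (Nat.dvd_of_mod_eq_zero h)
    exact absurd (Nat.le_of_dvd hi.1 this) (by omega)
  have hinj : Set.InjOn (· * b % a) (Ico 1 a : Set ℕ) := by
    intro i hi j hj h
    simp only [coe_Ico, Set.mem_Ico] at hi hj
    have := Nat.ModEq.cancel_right_of_coprime hab h
    rwa [Nat.ModEq, Nat.mod_eq_of_lt hi.2, Nat.mod_eq_of_lt hj.2] at this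
  exact sum_nbij _ hmaps hinj (surjOn_of_injOn_of_card_le _ hmaps hinj le_rfl) fun _ _ => rfl

theorem natCast_mul_div_add_mod {R : Type*} [Semiring R] (m n : ℕ) :
    (n : R) * (m / n : ℕ) + (m % n : ℕ) = m := by
  rw [← Nat.cast_mul, ← Nat.cast_add, Nat.div_add_mod]

theorem sum_mul_div_reciprocity {K : Type*} [Field K] [CharZero K] (ha : 0 < a) (hb : 0 < b)
    (hab : a.Coprime b) :
    (b : K) * ∑ i ∈ Ico 1 a, (i : K) * (i * b / a : ℕ)
        + a * ∑ j ∈ Ico 1 b, (j : K) * (j * a / b : ℕ)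
      = (a - 1) * (b - 1) * (8 * a * b - a - b - 1) / 12 := by
  have hcount : 2 * ∑ i ∈ Ico 1 a, (i : K) * (i * b / a : ℕ)
      + (∑ j ∈ Ico 1 b, ((j * a / b : ℕ) : K) ^ 2
        + ∑ j ∈ Ico 1 b, ((j * a / b : ℕ) : K))
      = a * (a - 1) * (b - 1) := by
    have := congrArg (Nat.cast : ℕ → K) (sum_two_mul_mul_div_add_sum_div_mul_succ hab)
    push_cast [Nat.cast_sub ha, Nat.cast_sub hb] at this
    rw [← this, mul_sum, ← sum_add_distrib]
    congr 1
    · exact sum_congr rfl fun i _ => by ring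
    · exact sum_congr rfl fun j _ => by ring
  have div_eq_sub_mod (j : ℕ) : (b : K) * (j * a / b : ℕ) = a * j - (j * a % b : ℕ) := by
    have := natCast_mul_div_add_mod (R := K) (j * a) b
    push_cast at this
    linear_combination this
  have hq : (b : K) * ∑ j ∈ Ico 1 b, ((j * a / b : ℕ) : K)
      = (a - 1) * ∑ j ∈ Ico 1 b, (j : K) := by
    rw [mul_sum, sum_congr rfl fun j _ => div_eq_sub_mod j, sum_sub_distrib, ← mul_sum,
      sum_Ico_mul_mod hab.symm (fun r => (r : K))]
    ring
  have hq2 : (b : K) ^ 2 * ∑ j ∈ Ico 1 b, ((j * a / b : ℕ) : K) ^ 2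
      = 2 * a * b * ∑ j ∈ Ico 1 b, (j : K) * (j * a / b : ℕ)
        + (1 - a ^ 2) * ∑ j ∈ Ico 1 b, (j : K) ^ 2 := by
    have hpt (j : ℕ) : (b : K) ^ 2 * ((j * a / b : ℕ) : K) ^ 2
        = 2 * a * b * (j * (j * a / b : ℕ)) + ((j * a % b : ℕ) : K) ^ 2 - a ^ 2 * j ^ 2 := by
      linear_combination (b * (j * a / b : ℕ) - a * j - (j * a % b : ℕ) : K) * div_eq_sub_mod j
    rw [mul_sum, sum_congr rfl fun j _ => hpt j, sum_sub_distrib, sum_add_distrib, ← mul_sum,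
      ← mul_sum, sum_Ico_mul_mod hab.symm (fun r => (r : K) ^ 2)]
    ring
  rw [sum_Ico_one_natCast] at hq
  rw [sum_Ico_one_natCast_sq] at hq2
  rw [← mul_right_inj' (Nat.cast_ne_zero.2 hb.ne' : (b : K) ≠ 0)]
  linear_combination ((b : K) ^ 2 / 2) * hcount - (1 / 2 : K) * hq2 - ((b : K) / 2) * hq

section Field

variable {K : Type*} [Field K] [LinearOrder K] [IsStrictOrderedRing K] [FloorRing K]

theorem fract_natCast_div (m n : ℕ) : Int.fract ((m : K) / n) = m / n - (m / n : ℕ) := by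
  rw [Int.fract, Int.floor_div_natCast, Int.floor_natCast]
  norm_cast

theorem sum_fract_mul_div (ha : 0 < a) (hab : a.Coprime b) :
    ∑ i ∈ Ico 1 a, Int.fract ((i : K) * b / a) = (a - 1) / 2 := by
  simp_rw [← Nat.cast_mul, Int.fract_div_natCast_eq_div_natCast_mod]
  rw [sum_Ico_mul_mod hab (fun r => (r : K) / a), ← sum_div, sum_Ico_one_natCast]
  field_simp

theorem mul_sum_fract_mul_fract (ha : 0 < a) :
    (a : K) * ∑ i ∈ Ico 1 a, Int.fract ((i : K) * b / a) * Int.fract ((i : K) * c / a)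
      = b * c * (a - 1) * (2 * a - 1) / 6
        - (b * ∑ i ∈ Ico 1 a, (i : K) * (i * c / a : ℕ)
          + c * ∑ i ∈ Ico 1 a, (i : K) * (i * b / a : ℕ))
        + a * ∑ i ∈ Ico 1 a, ((i * b / a : ℕ) : K) * (i * c / a : ℕ) := by
  have ha0 : (a : K) ≠ 0 := by positivity
  have hpt (i : ℕ) : (a : K) * (Int.fract ((i : K) * b / a) * Int.fract ((i : K) * c / a))
      = b * c / a * i ^ 2 - (b * (i * (i * c / a : ℕ)) + c * (i * (i * b / a : ℕ)))
        + a * ((i * b / a : ℕ) * (i * c / a : ℕ)) := by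
    simp only [← Nat.cast_mul, fract_natCast_div]
    push_cast
    field_simp
    ring
  rw [mul_sum, sum_congr rfl fun i _ => hpt i, sum_add_distrib, sum_sub_distrib,
    sum_add_distrib, ← mul_sum, ← mul_sum, ← mul_sum, ← mul_sum, sum_Ico_one_natCast_sq]
  field_simp

theorem sum_fract_sub_mul_fract_sub (ha : 0 < a) (hab : a.Coprime b) (hac : a.Coprime c)
    (α : K) :
    ∑ i ∈ Ico 1 a, (Int.fract ((i : K) * b / a) - α) * (Int.fract ((i : K) * c / a) - α)
      = ∑ i ∈ Ico 1 a, Int.fract ((i : K) * b / a) * Int.fract ((i : K) * c / a)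
        + (α ^ 2 - α) * (a - 1) := by
  simp only [sub_mul, mul_sub, sum_sub_distrib, ← sum_mul, ← mul_sum, sum_fract_mul_div ha hab,
    sum_fract_mul_div ha hac, sum_const, Nat.card_Ico, nsmul_eq_mul, Nat.cast_sub ha]
  push_cast
  ring

theorem sum_fract_mul_fract_cyclic (ha : 0 < a) (hb : 0 < b) (hc : 0 < c) (hab : a.Coprime b)
    (hac : a.Coprime c) (hbc : b.Coprime c) :
    ∑ i ∈ Ico 1 a, Int.fract ((i : K) * b / a) * Int.fract ((i : K) * c / a)
      + ∑ i ∈ Ico 1 b, Int.fract ((i : K) * a / b) * Int.fract ((i : K) * c / b)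
      + ∑ i ∈ Ico 1 c, Int.fract ((i : K) * a / c) * Int.fract ((i : K) * b / c)
      = ((a : K) ^ 2 + b ^ 2 + c ^ 2) / (12 * a * b * c) + (a + b + c) / 4 - 1 := by
  have hT := congrArg (Nat.cast : ℕ → K) (sum_div_mul_div_cyclic hab hac hbc)
  push_cast [Nat.cast_sub ha, Nat.cast_sub hb, Nat.cast_sub hc] at hT
  have ha' := mul_sum_fract_mul_fract (K := K) (b := b) (c := c) ha
  have hb' := mul_sum_fract_mul_fract (K := K) (b := a) (c := c) hb
  have hc' := mul_sum_fract_mul_fract (K := K) (b := a) (c := b) hc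
  have hab' := sum_mul_div_reciprocity (K := K) ha hb hab
  have hac' := sum_mul_div_reciprocity (K := K) ha hc hac
  have hbc' := sum_mul_div_reciprocity (K := K) hb hc hbc
  rw [eq_sub_iff_add_eq, ← sub_eq_iff_eq_add, eq_div_iff (by positivity)]
  linear_combination 12 * (b * c * ha' + a * c * hb' + a * b * hc') + 12 * a * b * c * hT
    - 12 * c ^ 2 * hab' - 12 * b ^ 2 * hac' - 12 * a ^ 2 * hbc'

end Field

theorem parametric_dedekind_rademacher_general (ν₀ ν₁ ν₂ : ℕ)
    (h₀ : 0 < ν₀) (h₁ : 0 < ν₁) (h₂ : 0 < ν₂)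
    (h01 : Nat.Coprime ν₀ ν₁) (h02 : Nat.Coprime ν₀ ν₂) (h12 : Nat.Coprime ν₁ ν₂)
    (a : ℝ) :
    (∑ i ∈ Finset.Ico 1 ν₀, (Int.fract ((i:ℝ) * ν₁ / ν₀) - a) * (Int.fract ((i:ℝ) * ν₂ / ν₀) - a))
    + (∑ i ∈ Finset.Ico 1 ν₁, (Int.fract ((i:ℝ) * ν₀ / ν₁) - a) * (Int.fract ((i:ℝ) * ν₂ / ν₁) - a))
    + (∑ i ∈ Finset.Ico 1 ν₂, (Int.fract ((i:ℝ) * ν₀ / ν₂) - a) * (Int.fract ((i:ℝ) * ν₁ / ν₂) - a))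
      = ((ν₀:ℝ)^2 + (ν₁:ℝ)^2 + (ν₂:ℝ)^2) / (12 * ν₀ * ν₁ * ν₂)
        + (1/2 - a)^2 * ((ν₀:ℝ) + ν₁ + ν₂) - (1 - 3*a + 3*a^2) := by
  rw [sum_fract_sub_mul_fract_sub h₀ h01 h02, sum_fract_sub_mul_fract_sub h₁ h01.symm h12,
    sum_fract_sub_mul_fract_sub h₂ h02.symm h12.symm]
  linear_combination sum_fract_mul_fract_cyclic (K := ℝ) h₀ h₁ h₂ h01 h02 h12

theorem parametric_dedekind_rademacher (ν₀ ν₁ ν₂ : ℕ)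
    (h₀ : 0 < ν₀) (h₁ : 0 < ν₁) (h₂ : 0 < ν₂)
    (hne01 : ν₀ ≠ ν₁) (hne02 : ν₀ ≠ ν₂) (hne12 : ν₁ ≠ ν₂)
    (h01 : Nat.Coprime ν₀ ν₁) (h02 : Nat.Coprime ν₀ ν₂) (h12 : Nat.Coprime ν₁ ν₂)
    (a : ℝ) (ha : a ∈ Set.Ioo (0:ℝ) 1) :
    (∑ i ∈ Finset.Ico 1 ν₀, (Int.fract ((i:ℝ) * ν₁ / ν₀) - a) * (Int.fract ((i:ℝ) * ν₂ / ν₀) - a))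
    + (∑ i ∈ Finset.Ico 1 ν₁, (Int.fract ((i:ℝ) * ν₀ / ν₁) - a) * (Int.fract ((i:ℝ) * ν₂ / ν₁) - a))
    + (∑ i ∈ Finset.Ico 1 ν₂, (Int.fract ((i:ℝ) * ν₀ / ν₂) - a) * (Int.fract ((i:ℝ) * ν₁ / ν₂) - a))
      = ((ν₀:ℝ)^2 + (ν₁:ℝ)^2 + (ν₂:ℝ)^2) / (12 * ν₀ * ν₁ * ν₂)
        + (1/2 - a)^2 * ((ν₀:ℝ) + ν₁ + ν₂) - (1 - 3*a + 3*a^2) :=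
  parametric_dedekind_rademacher_general ν₀ ν₁ ν₂ h₀ h₁ h₂ h01 h02 h12 a
end
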